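/- arXiv:2308.16547 — 6 statements merged into one kernel-verified Lean document; each statement's English description precedes it below -/
import Mathlib

section
/- Let q1, q2, g, r be positive natural numbers with r ≤ q2, and let M1 ∈ ℝ^{q1×g} and M2 ∈ ℝ^{q2×g} be real matrices. Define the cost functional O(α, β) := ‖M1 + α βᵀ M2‖_F² for α ∈ ℝ^{q1×r}, β ∈ ℝ^{q2×r}. Then the infimum of O over the set V_r := {(α, β) ∈ ℝ^{q1×r} × ℝ^{q2×r} : rank(α) = rank(β) = r} equals the infimum of O over the smaller set V̄_r := {(α, β) ∈ V_r : αᵀα is a diagonal matrix}. -/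
open Matrix

/-- Squared Frobenius norm of a real matrix. -/
noncomputable def frobSq {a b : ℕ} (A : Matrix (Fin a) (Fin b) ℝ) : ℝ :=
  ∑ i, ∑ j, (A i j) ^ 2

/-- The infimum of `O(α,β) = ‖M1 + α βᵀ M2‖_F²` over pairs of full-rank matrices
equals the infimum over the subset of pairs where moreover `αᵀα` is diagonal. -/
theorem inf_over_Vr_eq_inf_over_Vr_bar
    (q1 q2 g r : ℕ) (hq1 : 0 < q1) (hq2 : 0 < q2) (hg : 0 < g) (hr : 0 < r)
    (hrq2 : r ≤ q2)
    (M1 : Matrix (Fin q1) (Fin g) ℝ) (M2 : Matrix (Fin q2) (Fin g) ℝ) :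
    sInf ((fun p : Matrix (Fin q1) (Fin r) ℝ × Matrix (Fin q2) (Fin r) ℝ =>
          frobSq (M1 + p.1 * p.2ᵀ * M2)) ''
        {p : Matrix (Fin q1) (Fin r) ℝ × Matrix (Fin q2) (Fin r) ℝ |
          p.1.rank = r ∧ p.2.rank = r}) =
    sInf ((fun p : Matrix (Fin q1) (Fin r) ℝ × Matrix (Fin q2) (Fin r) ℝ =>
          frobSq (M1 + p.1 * p.2ᵀ * M2)) ''
        {p : Matrix (Fin q1) (Fin r) ℝ × Matrix (Fin q2) (Fin r) ℝ |
          (p.1.rank = r ∧ p.2.rank = r) ∧ (p.1ᵀ * p.1).IsDiag}) := by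
  congr 1
  apply Set.Subset.antisymm
  · rintro x ⟨⟨α, β⟩, ⟨hα, hβ⟩, rfl⟩
    -- diagonalize αᵀα
    have hA : (αᵀ * α).IsHermitian := by
      have := Matrix.isHermitian_conjTranspose_mul_self α
      rwa [Matrix.conjTranspose_eq_transpose_of_trivial] at this
    set P : Matrix (Fin r) (Fin r) ℝ := (hA.eigenvectorUnitary : Matrix (Fin r) (Fin r) ℝ)
      with hP
    have hPunit : IsUnit P := by
      refine ⟨⟨P, star P, ?_, ?_⟩, rfl⟩
      · exact (Matrix.mem_unitaryGroup_iff).mp hA.eigenvectorUnitary.2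
      · exact (Matrix.mem_unitaryGroup_iff').mp hA.eigenvectorUnitary.2
    have hPdet : IsUnit P.det := by
      rwa [← Matrix.isUnit_iff_isUnit_det]
    have hPPt : P * Pᵀ = 1 := by
      have := (Matrix.mem_unitaryGroup_iff).mp hA.eigenvectorUnitary.2
      rwa [Matrix.star_eq_conjTranspose, Matrix.conjTranspose_eq_transpose_of_trivial] at this
    refine ⟨(α * P, β * P), ⟨⟨?_, ?_⟩, ?_⟩, ?_⟩
    · rw [Matrix.rank_mul_eq_left_of_isUnit_det P α hPdet]; exact hα
    · rw [Matrix.rank_mul_eq_left_of_isUnit_det P β hPdet]; exact hβ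
    · have := hA.conjStarAlgAut_star_eigenvectorUnitary
      rw [Unitary.conjStarAlgAut_star_apply, Matrix.star_eq_conjTranspose, Matrix.conjTranspose_eq_transpose_of_trivial] at this
      show ((α * P)ᵀ * (α * P)).IsDiag
      have key : (α * P)ᵀ * (α * P) = diagonal (RCLike.ofReal ∘ hA.eigenvalues) := by
        rw [← this, ← hP, Matrix.transpose_mul]
        simp [Matrix.mul_assoc]
      rw [key]
      exact Matrix.isDiag_diagonal _
    · show frobSq (M1 + (α * P) * (β * P)ᵀ * M2) = frobSq (M1 + α * βᵀ * M2)
      rw [Matrix.transpose_mul]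
      have heq : α * P * (Pᵀ * βᵀ) = α * βᵀ := by
        rw [Matrix.mul_assoc α, ← Matrix.mul_assoc P, hPPt, Matrix.one_mul]
      rw [heq]
  · rintro x ⟨p, ⟨h1, _⟩, rfl⟩
    exact ⟨p, h1, rfl⟩
end

section
/- Let M ∈ ℝ^{s×g} and let C ∈ ℝ^{m×g} be a matrix of rank c ≤ m with compact SVD C = U Σ Vᵀ. Set W := M V ∈ ℝ^{s×c} and let σ̄_1 ≥ σ̄_2 ≥ … be the singular values of W (i.e., σ̄_i² are the eigenvalues of Wᵀ W arranged in decreasing order). Then for every natural number r with 1 ≤ r ≤ rank(W), the infimum of ‖M + α βᵀ C‖_F² over all pairs (α, β) ∈ ℝ^{s×r} × ℝ^{m×r} with rank(α) = rank(β) = r equals ‖M‖_F² − Σ_{i=1}^{r} σ̄_i², and this infimum is attained. -/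
open Matrix

section Aux

lemma frobSq_eq_trace {a b : ℕ} (A : Matrix (Fin a) (Fin b) ℝ) :
    frobSq A = Matrix.trace (Aᵀ * A) := by
  unfold frobSq Matrix.trace
  simp only [Matrix.diag_apply, Matrix.mul_apply, Matrix.transpose_apply, sq]
  exact Finset.sum_comm

lemma frobSq_nonneg {a b : ℕ} (A : Matrix (Fin a) (Fin b) ℝ) : 0 ≤ frobSq A := by
  unfold frobSq; positivity

lemma frobSq_add {a b : ℕ} (X Y : Matrix (Fin a) (Fin b) ℝ) :
    frobSq (X + Y) = frobSq X + 2 * Matrix.trace (Xᵀ * Y) + frobSq Y := by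
  have h : Matrix.trace (Yᵀ * X) = Matrix.trace (Xᵀ * Y) := by
    rw [← Matrix.trace_transpose (Yᵀ * X), Matrix.transpose_mul, Matrix.transpose_transpose]
  rw [frobSq_eq_trace, frobSq_eq_trace, frobSq_eq_trace, transpose_add, Matrix.add_mul,
    Matrix.mul_add, Matrix.mul_add, Matrix.trace_add, Matrix.trace_add, Matrix.trace_add, h]
  ring

lemma frobSq_mul_orth {a n k : ℕ} (A : Matrix (Fin a) (Fin k) ℝ) (B : Matrix (Fin n) (Fin k) ℝ)
    (hB : Bᵀ * B = 1) : frobSq (A * Bᵀ) = frobSq A := by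
  rw [frobSq_eq_trace, frobSq_eq_trace, Matrix.transpose_mul, Matrix.transpose_transpose,
    Matrix.mul_assoc, Matrix.trace_mul_comm, Matrix.mul_assoc, Matrix.mul_assoc, hB,
    Matrix.mul_one]

lemma frobSq_expand {a n k : ℕ} (X : Matrix (Fin a) (Fin n) ℝ) (B : Matrix (Fin n) (Fin k) ℝ)
    (A : Matrix (Fin a) (Fin k) ℝ) (hB : Bᵀ * B = 1) :
    frobSq (X + A * Bᵀ) = frobSq X - frobSq (X * B) + frobSq (X * B + A) := by
  rw [frobSq_add, frobSq_add, frobSq_mul_orth A B hB]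
  have htr : Matrix.trace ((X * B)ᵀ * A) = Matrix.trace (Xᵀ * (A * Bᵀ)) := by
    rw [Matrix.transpose_mul, Matrix.mul_assoc, Matrix.trace_mul_comm, Matrix.mul_assoc]
  rw [← htr]; ring

lemma sum_filter_lt {c r : ℕ} (hrc : r ≤ c) (f : Fin c → ℝ) :
    ∑ i ∈ Finset.univ.filter (fun i : Fin c => (i : ℕ) < r), f i
      = ∑ j : Fin r, f (Fin.castLE hrc j) := by
  refine (Finset.sum_bij (fun (j : Fin r) _ => Fin.castLE hrc j) ?_ ?_ ?_ ?_).symm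
  · intro j _
    simp [Fin.castLE, j.isLt]
  · intro a _ b _ h
    exact Fin.castLE_injective hrc h
  · intro i hi
    simp only [Finset.mem_filter, Finset.mem_univ, true_and] at hi
    exact ⟨⟨(i : ℕ), hi⟩, Finset.mem_univ _, rfl⟩
  · intro j _; rfl

lemma card_filter_lt {c k : ℕ} (hkc : k ≤ c) :
    ((Finset.univ.filter (fun i : Fin c => (i : ℕ) < k)).card : ℝ) = k := by
  have h := sum_filter_lt hkc (fun _ => (1 : ℝ))
  simpa using h

lemma lp_bound {c r : ℕ} (hrc : r ≤ c) (σ : Fin c → ℝ)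
    (hσnonneg : ∀ i, 0 ≤ σ i) (hσanti : Antitone σ)
    (t : Fin c → ℝ) (ht0 : ∀ i, 0 ≤ t i) (ht1 : ∀ i, t i ≤ 1)
    (hsum : ∑ i, t i = r) :
    ∑ i, σ i ^ 2 * t i ≤ ∑ i ∈ Finset.univ.filter (fun i : Fin c => (i : ℕ) < r), σ i ^ 2 := by
  classical
  have hcard : ((Finset.univ.filter (fun i : Fin c => (i : ℕ) < r)).card : ℝ) = r :=
    card_filter_lt hrc
  set A := Finset.univ.filter (fun i : Fin c => (i : ℕ) < r) with hA
  set θ : ℝ := if h : r < c then σ ⟨r, h⟩ ^ 2 else 0 with hθ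
  have hθ0 : 0 ≤ θ := by
    rw [hθ]; split <;> positivity
  have hθle : ∀ i ∈ A, θ ≤ σ i ^ 2 := by
    intro i hi
    simp only [hA, Finset.mem_filter, Finset.mem_univ, true_and] at hi
    rw [hθ]
    split
    · rename_i h
      have h1 : σ ⟨r, h⟩ ≤ σ i := hσanti (by exact_mod_cast le_of_lt hi)
      nlinarith [hσnonneg ⟨r, h⟩, hσnonneg i]
    · positivity
  have hθge : ∀ i ∈ Aᶜ, σ i ^ 2 ≤ θ := by
    intro i hi
    simp only [hA, Finset.mem_compl, Finset.mem_filter, Finset.mem_univ, true_and, not_lt] at hi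
    have hrc' : r < c := lt_of_le_of_lt hi i.isLt
    rw [hθ, dif_pos hrc']
    have h1 : σ i ≤ σ ⟨r, hrc'⟩ := hσanti (by exact_mod_cast hi)
    nlinarith [hσnonneg i, hσnonneg ⟨r, hrc'⟩]
  have hsplit := Finset.sum_add_sum_compl A (fun i => σ i ^ 2 * t i)
  have htsplit := Finset.sum_add_sum_compl A t
  have h1 : ∑ i ∈ Aᶜ, σ i ^ 2 * t i ≤ θ * ∑ i ∈ Aᶜ, t i := by
    rw [Finset.mul_sum]
    exact Finset.sum_le_sum fun i hi => mul_le_mul_of_nonneg_right (hθge i hi) (ht0 i)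
  have h2 : θ * ∑ i ∈ Aᶜ, t i = ∑ i ∈ A, θ * (1 - t i) := by
    have e1 : ∑ i ∈ A, θ * (1 - t i) = θ * ((A.card : ℝ) - ∑ i ∈ A, t i) := by
      rw [← Finset.mul_sum, Finset.sum_sub_distrib, Finset.sum_const, nsmul_eq_mul, mul_one]
    have e2 : ∑ i ∈ Aᶜ, t i = (r : ℝ) - ∑ i ∈ A, t i := by rw [hsum] at htsplit; linarith
    rw [e1, e2, hcard]
  have h3 : ∑ i ∈ A, (σ i ^ 2 * t i + θ * (1 - t i)) ≤ ∑ i ∈ A, σ i ^ 2 := by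
    refine Finset.sum_le_sum fun i hi => ?_
    have := hθle i hi
    nlinarith [ht1 i, ht0 i]
  calc ∑ i, σ i ^ 2 * t i = ∑ i ∈ A, σ i ^ 2 * t i + ∑ i ∈ Aᶜ, σ i ^ 2 * t i := hsplit.symm
    _ ≤ ∑ i ∈ A, σ i ^ 2 * t i + ∑ i ∈ A, θ * (1 - t i) := by rw [← h2]; linarith
    _ = ∑ i ∈ A, (σ i ^ 2 * t i + θ * (1 - t i)) := (Finset.sum_add_distrib).symm
    _ ≤ ∑ i ∈ A, σ i ^ 2 := h3

lemma gram_le {c r : ℕ} (hrc : r ≤ c) (σ : Fin c → ℝ)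
    (hσnonneg : ∀ i, 0 ≤ σ i) (hσanti : Antitone σ)
    (P : Matrix (Fin c) (Fin c) ℝ) (hP : Pᵀ * P = 1)
    (B : Matrix (Fin c) (Fin r) ℝ) (hB : Bᵀ * B = 1) :
    Matrix.trace (Bᵀ * (P * Matrix.diagonal (fun i => σ i ^ 2) * Pᵀ) * B)
      ≤ ∑ i ∈ Finset.univ.filter (fun i : Fin c => (i : ℕ) < r), σ i ^ 2 := by
  classical
  have hPPt : P * Pᵀ = 1 := mul_eq_one_comm.mp hP
  set D := Matrix.diagonal (fun i => σ i ^ 2) with hD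
  set Q := Pᵀ * B with hQdef
  have hQt : Qᵀ = Bᵀ * P := by rw [hQdef, transpose_mul, transpose_transpose]
  have hQQ : Qᵀ * Q = 1 := by
    rw [hQt, hQdef, Matrix.mul_assoc, ← Matrix.mul_assoc P, hPPt, Matrix.one_mul, hB]
  set t : Fin c → ℝ := fun i => ∑ j, Q i j ^ 2 with htdef
  have htrace : Matrix.trace (Bᵀ * (P * D * Pᵀ) * B) = ∑ i, σ i ^ 2 * t i := by
    have e1 : Bᵀ * (P * D * Pᵀ) * B = Qᵀ * (D * Q) := by
      rw [hQt, hQdef]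
      simp only [Matrix.mul_assoc]
    have hDQ : ∀ i j, (D * Q) i j = σ i ^ 2 * Q i j := by
      intro i j; rw [hD, Matrix.diagonal_mul]
    rw [e1, Matrix.trace]
    simp only [Matrix.diag_apply, Matrix.mul_apply, Matrix.transpose_apply, hDQ, htdef]
    rw [Finset.sum_comm]
    congr 1; ext i
    rw [Finset.mul_sum]
    congr 1; ext j
    ring
  have hsum : ∑ i, t i = (r : ℝ) := by
    have e : ∑ i, t i = Matrix.trace (Qᵀ * Q) := by
      rw [Matrix.trace]
      simp only [Matrix.diag_apply, Matrix.mul_apply, Matrix.transpose_apply, htdef]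
      rw [Finset.sum_comm]
      congr 1; ext i; congr 1; ext j; ring
    rw [e, hQQ, Matrix.trace_one]
    simp
  have ht0 : ∀ i, 0 ≤ t i := fun i => by positivity
  have ht1 : ∀ i, t i ≤ 1 := by
    intro i
    set Pi := Q * Qᵀ with hPidef
    have hPi : Pi * Pi = Pi := by
      rw [hPidef, Matrix.mul_assoc, ← Matrix.mul_assoc Qᵀ, hQQ, Matrix.one_mul]
    have hdiag : t i = Pi i i := by
      simp [htdef, hPidef, Matrix.mul_apply, sq]
    have hsq : Pi i i ^ 2 ≤ Pi i i := by
      conv_rhs => rw [← hPi]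
      have e2 : (Pi * Pi) i i = ∑ k, Pi i k * Pi k i := by simp [Matrix.mul_apply]
      rw [e2]
      have hsymm : ∀ k, Pi k i = Pi i k := by
        intro k; simp [hPidef, Matrix.mul_apply, mul_comm]
      calc Pi i i ^ 2 ≤ ∑ k, Pi i k ^ 2 := by
            refine Finset.single_le_sum (f := fun k => Pi i k ^ 2) (fun k _ => by positivity)
              (Finset.mem_univ i)
        _ = ∑ k, Pi i k * Pi k i := by congr 1; ext k; rw [hsymm k]; ring
    nlinarith [hdiag ▸ ht0 i]
  rw [htrace]
  exact lp_bound hrc σ hσnonneg hσanti t ht0 ht1 hsum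

lemma exists_factor {s c r : ℕ} (K : Matrix (Fin s) (Fin c) ℝ)
    (hK : K.rank ≤ r) (hrc : r ≤ c) :
    ∃ B : Matrix (Fin c) (Fin r) ℝ, Bᵀ * B = 1 ∧ K * (B * Bᵀ) = K := by
  classical
  let e : EuclideanSpace ℝ (Fin c) ≃ₗ[ℝ] (Fin c → ℝ) := WithLp.linearEquiv 2 ℝ (Fin c → ℝ)
  set S0 : Submodule ℝ (Fin c → ℝ) := Submodule.span ℝ (Set.range K) with hS0
  set S : Submodule ℝ (EuclideanSpace ℝ (Fin c)) := S0.comap e.toLinearMap with hS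
  have hmapS : S.map e.toLinearMap = S0 :=
    Submodule.map_comap_eq_of_surjective e.surjective S0
  have hfinS : Module.finrank ℝ S = K.rank := by
    have h1 : Module.finrank ℝ S0 = K.rank := by
      rw [← Matrix.rank_transpose K, Matrix.rank, Matrix.range_mulVecLin]; rfl
    rw [← h1, ← hmapS, LinearEquiv.finrank_map_eq]
  set d := Module.finrank ℝ S with hd
  have hdr : d ≤ r := hfinS ▸ hK
  have hdc : d + Module.finrank ℝ Sᗮ = c := by
    have := Submodule.finrank_add_finrank_orthogonal (K := S)
    rwa [finrank_euclideanSpace_fin] at this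
  set bS := stdOrthonormalBasis ℝ S with hbS
  set bT := stdOrthonormalBasis ℝ Sᗮ with hbT
  set b : Fin r → EuclideanSpace ℝ (Fin c) := fun j =>
    if h : (j : ℕ) < d then (bS ⟨j, h⟩ : EuclideanSpace ℝ (Fin c))
    else (bT ⟨(j : ℕ) - d, by have := j.isLt; omega⟩ : EuclideanSpace ℝ (Fin c)) with hb
  have horth : ∀ j k : Fin r, inner (𝕜 := ℝ) (b j) (b k) = if j = k then (1:ℝ) else 0 := by
    intro j k
    by_cases hj : (j : ℕ) < d <;> by_cases hk : (k : ℕ) < d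
    · rw [hb]; simp only [dif_pos hj, dif_pos hk]
      rw [← Submodule.coe_inner, orthonormal_iff_ite.mp bS.orthonormal]
      congr 1
      simp only [Fin.mk.injEq, eq_iff_iff]
      exact ⟨fun h => Fin.ext h, fun h => congrArg Fin.val h⟩
    · rw [hb]; simp only [dif_pos hj, dif_neg hk]
      rw [if_neg (fun h : j = k => hk (h ▸ hj)),
        Submodule.inner_right_of_mem_orthogonal (bS ⟨j, hj⟩).2 (bT _).2]
    · rw [hb]; simp only [dif_neg hj, dif_pos hk]
      rw [if_neg (fun h : j = k => hj (h ▸ hk)), ← inner_conj_symm,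
        Submodule.inner_right_of_mem_orthogonal (bS ⟨k, hk⟩).2 (bT _).2]
      simp
    · rw [hb]; simp only [dif_neg hj, dif_neg hk]
      rw [← Submodule.coe_inner, orthonormal_iff_ite.mp bT.orthonormal]
      congr 1
      simp only [Fin.mk.injEq, eq_iff_iff]
      constructor
      · intro h; exact Fin.ext (by omega)
      · intro h; rw [h]
  set B : Matrix (Fin c) (Fin r) ℝ := Matrix.of fun i j => b j i with hB
  have hBtB : Bᵀ * B = 1 := by
    ext j k
    have h1 : (Bᵀ * B) j k = ∑ i, b j i * b k i := by
      simp [hB, Matrix.mul_apply]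
    rw [h1]
    have h2 : inner (𝕜 := ℝ) (b j) (b k) = ∑ i, b j i * b k i := by
      rw [PiLp.inner_apply]; congr 1; ext i; rw [RCLike.inner_apply', conj_trivial]
    rw [← h2, horth j k, Matrix.one_apply]
  refine ⟨B, hBtB, ?_⟩
  have hPB : (B * Bᵀ) * B = B := by
    rw [Matrix.mul_assoc, hBtB, Matrix.mul_one]
  have hfix : ∀ v ∈ S0, (B * Bᵀ) *ᵥ v = v := by
    have hspan : S0 ≤ Submodule.span ℝ (Set.range fun j : Fin r => (fun i => B i j)) := by
      have hSspan : S ≤ Submodule.span ℝ (Set.range b) := by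
        have h1 : Submodule.span ℝ (S.subtype '' Set.range (bS : Fin d → S)) = S := by
          rw [← Submodule.map_span]
          have h2 : Submodule.span ℝ (Set.range (bS : Fin d → S)) = ⊤ := by
            rw [← bS.coe_toBasis, bS.toBasis.span_eq]
          rw [h2]
          exact Submodule.map_subtype_top S
        rw [← h1]
        apply Submodule.span_le.mpr
        rintro x ⟨y, ⟨i, rfl⟩, rfl⟩
        refine Submodule.subset_span ⟨⟨(i : ℕ), lt_of_lt_of_le i.isLt hdr⟩, ?_⟩
        rw [hb]
        simp only [Fin.eta, dif_pos i.isLt]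
        exact dif_pos i.isLt
      calc S0 = S.map e.toLinearMap := hmapS.symm
        _ ≤ (Submodule.span ℝ (Set.range b)).map e.toLinearMap := Submodule.map_mono hSspan
        _ = Submodule.span ℝ (e.toLinearMap '' Set.range b) := Submodule.map_span _ _
        _ = Submodule.span ℝ (Set.range fun j : Fin r => (fun i => B i j)) := by
            rw [← Set.range_comp]
            rfl
    intro v hv
    refine Submodule.span_induction ?_ ?_ ?_ ?_ (hspan hv)
    · rintro x ⟨j, rfl⟩
      ext i
      have e3 : ((B * Bᵀ) *ᵥ fun i => B i j) i = ((B * Bᵀ) * B) i j := by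
        simp [Matrix.mulVec, Matrix.mul_apply, dotProduct]
      rw [e3, hPB]
    · exact Matrix.mulVec_zero _
    · intro x y _ _ hx hy
      rw [Matrix.mulVec_add, hx, hy]
    · intro a x _ hx
      rw [Matrix.mulVec_smul, hx]
  have hcol : (B * Bᵀ) * Kᵀ = Kᵀ := by
    ext i j
    have h1 : ∀ (X : Matrix (Fin c) (Fin c) ℝ) (Y : Matrix (Fin c) (Fin s) ℝ) i j,
        (X * Y) i j = (X *ᵥ fun k => Y k j) i := by
      intro X Y i j; simp [Matrix.mulVec, Matrix.mul_apply, dotProduct]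
    rw [h1]
    have hKj : (fun k => Kᵀ k j) ∈ S0 := by
      rw [hS0]
      exact Submodule.subset_span ⟨j, rfl⟩
    rw [hfix _ hKj]
  have := congrArg Matrix.transpose hcol
  rwa [Matrix.transpose_mul, Matrix.transpose_transpose, Matrix.transpose_mul,
    Matrix.transpose_transpose] at this

end Aux

/-- Low-rank update minimization: the infimum of `‖M + α βᵀ C‖_F²` over rank-`r` pairs
`(α, β)` equals `‖M‖_F² − Σ_{i<r} σ̄_i²`, where `σ̄_i` are the (decreasingly ordered)
singular values of `W = M V`, and the infimum is attained. -/
theorem isLeast_lowrank_update_cost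
    (s g m c : ℕ) (hc : c ≤ m)
    (M : Matrix (Fin s) (Fin g) ℝ) (C : Matrix (Fin m) (Fin g) ℝ)
    (U : Matrix (Fin m) (Fin c) ℝ) (Sg : Matrix (Fin c) (Fin c) ℝ)
    (V : Matrix (Fin g) (Fin c) ℝ)
    (hU : Uᵀ * U = 1) (hV : Vᵀ * V = 1)
    (hSgDiag : Sg.IsDiag) (hSgPos : ∀ i, 0 < Sg i i)
    (hC : C = U * Sg * Vᵀ) (hrankC : C.rank = c)
    (σ : Fin c → ℝ) (P : Matrix (Fin c) (Fin c) ℝ)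
    (hP : Pᵀ * P = 1)
    (hσeig : (M * V)ᵀ * (M * V) = P * Matrix.diagonal (fun i => σ i ^ 2) * Pᵀ)
    (hσnonneg : ∀ i, 0 ≤ σ i) (hσanti : Antitone σ)
    (r : ℕ) (hr1 : 1 ≤ r) (hr2 : r ≤ (M * V).rank) :
    IsLeast {x : ℝ | ∃ (α : Matrix (Fin s) (Fin r) ℝ) (β : Matrix (Fin m) (Fin r) ℝ),
        α.rank = r ∧ β.rank = r ∧ x = frobSq (M + α * βᵀ * C)}
      (frobSq M - ∑ i ∈ Finset.univ.filter (fun i : Fin c => (i : ℕ) < r), σ i ^ 2) := by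
  classical
  have hrc : r ≤ c := le_trans hr2 (Matrix.rank_le_width (M * V))
  set W := M * V with hWdef
  set D := Matrix.diagonal (fun i : Fin c => σ i ^ 2) with hD
  set Sr := ∑ i ∈ Finset.univ.filter (fun i : Fin c => (i : ℕ) < r), σ i ^ 2 with hSr
  have hPPt : P * Pᵀ = 1 := mul_eq_one_comm.mp hP
  have hdetP : IsUnit P.det := by
    have h := congrArg Matrix.det hP
    rw [Matrix.det_mul, Matrix.det_transpose, Matrix.det_one] at h
    exact IsUnit.of_mul_eq_one _ h
  have hdetPt : IsUnit Pᵀ.det := by rwa [Matrix.det_transpose]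
  -- positivity of the first r singular values
  have hσpos : ∀ i : Fin c, (i : ℕ) < r → 0 < σ i := by
    intro i hi
    rcases (hσnonneg i).lt_or_eq with h | h
    · exact h
    · exfalso
      have hrank : W.rank = Fintype.card {j : Fin c // σ j ^ 2 ≠ 0} := by
        rw [← Matrix.rank_transpose_mul_self, hσeig, Matrix.mul_assoc,
          Matrix.rank_mul_eq_right_of_isUnit_det P _ hdetP,
          Matrix.rank_mul_eq_left_of_isUnit_det Pᵀ _ hdetPt, Matrix.rank_diagonal]
      have hmono : Fintype.card {j : Fin c // σ j ^ 2 ≠ 0}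
          ≤ Fintype.card {j : Fin c // (j : ℕ) < (i : ℕ)} := by
        apply Fintype.card_subtype_mono
        intro j hj2
        by_contra hjj
        have h1 : σ j ≤ σ i := hσanti (by exact_mod_cast not_lt.mp hjj)
        have h2 : σ j = 0 := le_antisymm (h ▸ h1) (hσnonneg j)
        exact hj2 (by rw [h2]; ring)
      have hcard : Fintype.card {j : Fin c // (j : ℕ) < (i : ℕ)} = (i : ℕ) := by
        rw [Fintype.card_subtype]
        have h3 := card_filter_lt (c := c) (k := (i : ℕ)) (le_of_lt i.isLt)
        exact_mod_cast h3
      rw [hrank] at hr2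
      omega
  constructor
  · -- attainment
    set ι : Fin r → Fin c := Fin.castLE hrc with hι
    set E : Matrix (Fin c) (Fin r) ℝ := Matrix.of fun i j => if i = ι j then (1:ℝ) else 0 with hE
    have hEtE : Eᵀ * E = 1 := by
      ext j k
      rw [Matrix.mul_apply, Matrix.one_apply]
      simp only [hE, Matrix.transpose_apply, Matrix.of_apply, ite_mul, one_mul, zero_mul,
        Finset.sum_ite_eq', Finset.mem_univ, if_true]
      by_cases h : j = k
      · simp [h]
      · rw [if_neg (fun hh => h (Fin.castLE_injective hrc hh)), if_neg h]
    have hEDE : Eᵀ * (D * E) = Matrix.diagonal (fun j : Fin r => σ (ι j) ^ 2) := by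
      have hDE : ∀ i k, (D * E) i k = σ i ^ 2 * E i k := fun i k => by
        rw [hD, Matrix.diagonal_mul]
      ext j k
      rw [Matrix.mul_apply, Matrix.diagonal_apply]
      simp only [hDE]
      simp only [Matrix.transpose_apply, hDE, hE, Matrix.of_apply, mul_ite, mul_one, mul_zero,
        ite_mul, zero_mul, Finset.sum_ite_eq', Finset.mem_univ, if_true]
      by_cases h : j = k
      · simp [h]
      · rw [if_neg (fun hh => h (Fin.castLE_injective hrc hh).symm), if_neg h]
    set B0 : Matrix (Fin c) (Fin r) ℝ := P * E with hB0def
    have hB0tB0 : B0ᵀ * B0 = 1 := by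
      rw [hB0def, Matrix.transpose_mul, Matrix.mul_assoc, ← Matrix.mul_assoc Pᵀ P E, hP,
        Matrix.one_mul, hEtE]
    have hKey : B0ᵀ * ((P * D * Pᵀ) * B0) = Eᵀ * (D * E) := by
      rw [hB0def, Matrix.transpose_mul]
      simp only [Matrix.mul_assoc]
      rw [← Matrix.mul_assoc Pᵀ P E, hP, Matrix.one_mul, ← Matrix.mul_assoc Pᵀ P (D * E), hP,
        Matrix.one_mul]
    have hWB0 : (W * B0)ᵀ * (W * B0) = Matrix.diagonal (fun j : Fin r => σ (ι j) ^ 2) := by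
      rw [Matrix.transpose_mul, Matrix.mul_assoc, ← Matrix.mul_assoc Wᵀ W B0, hσeig, hKey, hEDE]
    -- inverse of Sg
    set Sinv : Matrix (Fin c) (Fin c) ℝ := Matrix.diagonal (fun i => (Sg i i)⁻¹) with hSinvDef
    have hSinvSg : Sinv * Sg = 1 := by
      ext i j
      rw [hSinvDef, Matrix.diagonal_mul, Matrix.one_apply]
      by_cases h : i = j
      · subst h
        simp [inv_mul_cancel₀ (ne_of_gt (hSgPos i))]
      · rw [if_neg h, hSgDiag h, mul_zero]
    have hSinvT : Sinvᵀ = Sinv := Matrix.diagonal_transpose _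
    set α : Matrix (Fin s) (Fin r) ℝ := -(W * B0) with hαdef
    set β : Matrix (Fin m) (Fin r) ℝ := U * (Sinv * B0) with hβdef
    have hβt : βᵀ = B0ᵀ * Sinv * Uᵀ := by
      rw [hβdef, Matrix.transpose_mul, Matrix.transpose_mul, hSinvT]
    have hβC : βᵀ * C = B0ᵀ * Vᵀ := by
      rw [hβt, hC]
      simp only [Matrix.mul_assoc]
      rw [← Matrix.mul_assoc Uᵀ U (Sg * Vᵀ), hU, Matrix.one_mul,
        ← Matrix.mul_assoc Sinv Sg Vᵀ, hSinvSg, Matrix.one_mul]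
    -- value of the objective at (α, β)
    have hform : M + α * βᵀ * C = M + (α * B0ᵀ) * Vᵀ := by
      rw [Matrix.mul_assoc α βᵀ C, hβC, ← Matrix.mul_assoc]
    have hWB0val : frobSq (W * B0) = Sr := by
      rw [frobSq_eq_trace, hWB0, Matrix.trace_diagonal, hSr,
        sum_filter_lt hrc (fun i => σ i ^ 2)]
    have hzero : frobSq (W * B0 + α) = 0 := by
      rw [hαdef, add_neg_cancel]
      simp [frobSq]
    have hvalue : frobSq (M + α * βᵀ * C) = frobSq M - Sr := by
      rw [hform, frobSq_expand M V (α * B0ᵀ) hV, ← hWdef, frobSq_expand W B0 α hB0tB0,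
        hWB0val, hzero]
      ring
    -- rank of α
    have hαtα : αᵀ * α = Matrix.diagonal (fun j : Fin r => σ (ι j) ^ 2) := by
      rw [hαdef, Matrix.transpose_neg, Matrix.neg_mul, Matrix.mul_neg, neg_neg, hWB0]
    have hσιpos : ∀ j : Fin r, 0 < σ (ι j) := by
      intro j
      exact hσpos (ι j) (by simpa [hι, Fin.castLE] using j.isLt)
    have hdetD : IsUnit (Matrix.diagonal (fun j : Fin r => σ (ι j) ^ 2)).det := by
      rw [Matrix.det_diagonal]
      refine isUnit_iff_ne_zero.mpr (ne_of_gt (Finset.prod_pos fun j _ => ?_))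
      have := hσιpos j
      positivity
    have hrankα : α.rank = r := by
      have h1 : (αᵀ * α).rank = r := by
        rw [hαtα, Matrix.rank_of_isUnit _ ((Matrix.isUnit_iff_isUnit_det _).mpr hdetD),
          Fintype.card_fin]
      have h2 := Matrix.rank_mul_le_right αᵀ α
      rw [h1] at h2
      exact le_antisymm (Matrix.rank_le_width α) h2
    -- rank of β
    have hdetSinv : IsUnit Sinv.det := by
      rw [hSinvDef, Matrix.det_diagonal]
      refine isUnit_iff_ne_zero.mpr (ne_of_gt (Finset.prod_pos fun i _ => ?_))
      exact inv_pos.mpr (hSgPos i)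
    have hrankE : E.rank = r := by
      refine le_antisymm (Matrix.rank_le_width E) ?_
      have h1 : (Eᵀ * E).rank = r := by rw [hEtE, Matrix.rank_one, Fintype.card_fin]
      have h2 := Matrix.rank_mul_le_right Eᵀ E
      rw [h1] at h2
      exact h2
    have hrankG : (Sinv * B0).rank = r := by
      rw [hB0def, Matrix.rank_mul_eq_right_of_isUnit_det Sinv (P * E) hdetSinv,
        Matrix.rank_mul_eq_right_of_isUnit_det P E hdetP, hrankE]
    have hUβ : Uᵀ * β = Sinv * B0 := by
      rw [hβdef, ← Matrix.mul_assoc, hU, Matrix.one_mul]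
    have hrankβ : β.rank = r := by
      refine le_antisymm (Matrix.rank_le_width β) ?_
      calc r = (Sinv * B0).rank := hrankG.symm
        _ = (Uᵀ * β).rank := by rw [hUβ]
        _ ≤ β.rank := Matrix.rank_mul_le_right Uᵀ β
    exact ⟨α, β, hrankα, hrankβ, hvalue.symm⟩
  · -- lower bound
    rintro x ⟨α, β, hα, hβ, rfl⟩
    set N := α * (βᵀ * U * Sg) with hN
    have hNV : M + α * βᵀ * C = M + N * Vᵀ := by
      rw [hC, hN]
      simp only [Matrix.mul_assoc]
    have hNr : N.rank ≤ r := le_trans (Matrix.rank_mul_le_left α _) (le_of_eq hα)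
    obtain ⟨B, hB, hfixN⟩ := exists_factor N hNr hrc
    have hNAB : N = (N * B) * Bᵀ := by rw [Matrix.mul_assoc, hfixN]
    have e1 : frobSq (M + α * βᵀ * C) = frobSq M - frobSq W + frobSq (W + N) := by
      rw [hNV, frobSq_expand M V N hV, hWdef]
    have e2 : frobSq (W + N) = frobSq W - frobSq (W * B) + frobSq (W * B + N * B) := by
      conv_lhs => rw [hNAB]
      exact frobSq_expand W B (N * B) hB
    have e3 : frobSq (W * B) ≤ Sr := by
      rw [frobSq_eq_trace]
      have e4 : (W * B)ᵀ * (W * B) = Bᵀ * (P * D * Pᵀ) * B := by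
        rw [← hσeig]
        rw [Matrix.transpose_mul]
        simp only [Matrix.mul_assoc]
      rw [e4, hD, hSr]
      exact gram_le hrc σ hσnonneg hσanti P hP B hB
    have e5 := frobSq_nonneg (W * B + N * B)
    linarith [e1, e2, e3, e5]
end

section
/- Let M ∈ ℝ^{s×g}, C ∈ ℝ^{m×g}, α ∈ ℝ^{s×r} and β ∈ ℝ^{m×r}, and suppose the columns of α are pairwise orthogonal, i.e., αᵀα is a diagonal matrix. Denote by α_i ∈ ℝ^{s} and β_i ∈ ℝ^{m} the i-th columns of α and β. Then ‖M + α βᵀ C‖_F² = ‖M‖_F² + Σ_{i=1}^{r} ‖α_i‖² ‖Cᵀ β_i‖² + 2 Σ_{i=1}^{r} β_iᵀ C Mᵀ α_i. -/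
open Matrix

/-- Expansion of the cost `‖M + α βᵀ C‖_F²` when the columns of `α` are pairwise
orthogonal (`αᵀα` diagonal):
`‖M + α βᵀ C‖_F² = ‖M‖_F² + Σᵢ ‖αᵢ‖²‖Cᵀβᵢ‖² + 2 Σᵢ βᵢᵀ C Mᵀ αᵢ`. -/
theorem frobSq_expand_orthogonal_columns
    (s g m r : ℕ)
    (M : Matrix (Fin s) (Fin g) ℝ) (C : Matrix (Fin m) (Fin g) ℝ)
    (α : Matrix (Fin s) (Fin r) ℝ) (β : Matrix (Fin m) (Fin r) ℝ)
    (hdiag : (αᵀ * α).IsDiag) :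
    frobSq (M + α * βᵀ * C) =
      frobSq M
      + ∑ i : Fin r,
          (∑ j : Fin s, (α j i) ^ 2) * (∑ k : Fin g, (∑ l : Fin m, C l k * β l i) ^ 2)
      + 2 * ∑ i : Fin r, (βᵀ * C * Mᵀ * α) i i := by
  set N : Matrix (Fin s) (Fin g) ℝ := α * βᵀ * C with hN
  set B : Matrix (Fin r) (Fin g) ℝ := βᵀ * C with hB
  -- expansion of the square
  have expand : frobSq (M + N) = frobSq M + (∑ i, ∑ j, (N i j)^2)
      + 2 * ∑ i, ∑ j, M i j * N i j := by
    simp only [frobSq, Matrix.add_apply, add_sq, Finset.sum_add_distrib, Finset.mul_sum]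
    ring_nf
  -- cross term
  have cross : ∑ i, ∑ j, M i j * N i j = ∑ i : Fin r, (βᵀ * C * Mᵀ * α) i i := by
    have h1 : trace (Mᵀ * N) = ∑ i, ∑ j, M i j * N i j := by
      rw [trace]
      simp only [diag, mul_apply, transpose_apply]
      rw [Finset.sum_comm]
    have h2 : trace (Mᵀ * N) = trace (βᵀ * C * Mᵀ * α) := by
      rw [hN, trace_mul_comm, trace_mul_comm (βᵀ * C * Mᵀ) α]
      congr 1
      simp [Matrix.mul_assoc]
    rw [← h1, h2, trace]
    rfl
  -- quadratic term
  have quad : ∑ i, ∑ j, (N i j)^2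
      = ∑ k : Fin r, (∑ j : Fin s, (α j k) ^ 2) *
          (∑ j : Fin g, (∑ l : Fin m, C l j * β l k) ^ 2) := by
    have hNB : ∀ i j, N i j = ∑ k, α i k * B k j := by
      intro i j
      rw [hN, hB, Matrix.mul_assoc, mul_apply]
    have step1 : ∀ j : Fin g, ∑ i, (N i j)^2 = ∑ k, (αᵀ * α) k k * (B k j)^2 := by
      intro j
      have e1 : ∀ i, (N i j)^2
          = ∑ k, ∑ k', (α i k * α i k') * (B k j * B k' j) := by
        intro i
        rw [sq, hNB, Finset.sum_mul_sum]
        exact Finset.sum_congr rfl fun k _ => Finset.sum_congr rfl fun k' _ => by ring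
      simp_rw [e1]
      rw [Finset.sum_comm]
      refine Finset.sum_congr rfl fun k _ => ?_
      rw [Finset.sum_comm]
      have e2 : ∀ k' : Fin r, ∑ i, (α i k * α i k') * (B k j * B k' j)
          = (αᵀ * α) k k' * (B k j * B k' j) := by
        intro k'
        rw [mul_apply, Finset.sum_mul]
        exact Finset.sum_congr rfl fun i _ => by simp only [transpose_apply]
      simp_rw [e2]
      rw [Finset.sum_eq_single k]
      · ring
      · intro k' _ hk'
        rw [hdiag (Ne.symm hk')]
        ring
      · intro h; exact absurd (Finset.mem_univ k) h
    rw [Finset.sum_comm]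
    simp_rw [step1]
    rw [Finset.sum_comm]
    refine Finset.sum_congr rfl fun k _ => ?_
    rw [← Finset.mul_sum]
    congr 1
    · rw [mul_apply]
      exact Finset.sum_congr rfl fun i _ => by simp [transpose_apply, sq]
    · refine Finset.sum_congr rfl fun j _ => ?_
      congr 1
      rw [hB, mul_apply]
      exact Finset.sum_congr rfl fun l _ => by simp only [transpose_apply]; ring
  rw [expand, cross, quad]
end

section
/- Let M ∈ ℝ^{s×c} be a real matrix and K ∈ ℝ a constant. Define Ô : ℝ^{s×r} × ℝ^{c×r} → ℝ by Ô(α, γ) := K + Σ_{i=1}^{r} ‖α_i‖² ‖γ_i‖² + 2 Σ_{i=1}^{r} γ_iᵀ Mᵀ α_i, where α_i, γ_i denote the i-th columns of α, γ. Suppose that (α, γ) is a critical point of Ô (the derivative of Ô vanishes at (α, γ)) and that α_i ≠ 0 for all i = 1, …, r. Then for each i: γ_i = −Mᵀ α_i / ‖α_i‖², and M Mᵀ α_i = σ_i² α_i where σ_i := ‖Mᵀ α_i‖ / ‖α_i‖; moreover Ô(α, γ) = K − Σ_{i=1}^{r} σ_i². -/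
open Matrix

attribute [local instance] Matrix.normedAddCommGroup Matrix.normedSpace

/-- Characterization of the critical points of
`Ô(α, γ) = K + Σᵢ ‖αᵢ‖²‖γᵢ‖² + 2 Σᵢ γᵢᵀ Mᵀ αᵢ` with nonzero columns `αᵢ`:
each `γᵢ = −Mᵀαᵢ/‖αᵢ‖²`, each `αᵢ` satisfies `M Mᵀ αᵢ = σᵢ² αᵢ` with
`σᵢ = ‖Mᵀαᵢ‖/‖αᵢ‖`, and the value of `Ô` there is `K − Σᵢ σᵢ²`. -/
theorem critical_points_of_cost
    (s c r : ℕ) (M : Matrix (Fin s) (Fin c) ℝ) (K : ℝ)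
    (O : Matrix (Fin s) (Fin r) ℝ × Matrix (Fin c) (Fin r) ℝ → ℝ)
    (hO : O = fun p =>
      K + ∑ i : Fin r, (∑ l : Fin s, (p.1 l i) ^ 2) * (∑ k : Fin c, (p.2 k i) ^ 2)
        + 2 * ∑ i : Fin r, ∑ k : Fin c, ∑ l : Fin s, p.2 k i * M l k * p.1 l i)
    (α : Matrix (Fin s) (Fin r) ℝ) (γ : Matrix (Fin c) (Fin r) ℝ)
    (hcrit : fderiv ℝ O (α, γ) = 0)
    (hα : ∀ i : Fin r, (fun l => α l i) ≠ (0 : Fin s → ℝ))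
    (σ : Fin r → ℝ)
    (hσ : ∀ i, σ i = Real.sqrt (∑ k : Fin c, (∑ l : Fin s, M l k * α l i) ^ 2) /
        Real.sqrt (∑ l : Fin s, (α l i) ^ 2)) :
    (∀ i k, γ k i = -(∑ l : Fin s, M l k * α l i) / (∑ l : Fin s, (α l i) ^ 2)) ∧
    (∀ i j, ((M * Mᵀ) *ᵥ fun l => α l i) j = σ i ^ 2 * α j i) ∧
    O (α, γ) = K - ∑ i : Fin r, σ i ^ 2 := by
  subst hO
  have hdiff : Differentiable ℝ (fun p : Matrix (Fin s) (Fin r) ℝ × Matrix (Fin c) (Fin r) ℝ =>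
      K + ∑ i : Fin r, (∑ l : Fin s, (p.1 l i) ^ 2) * (∑ k : Fin c, (p.2 k i) ^ 2)
        + 2 * ∑ i : Fin r, ∑ k : Fin c, ∑ l : Fin s, p.2 k i * M l k * p.1 l i) := by
    fun_prop
  -- positivity of column norms
  have hA : ∀ i : Fin r, 0 < ∑ l : Fin s, (α l i) ^ 2 := by
    intro i
    obtain ⟨l0, hl0⟩ := Function.ne_iff.mp (hα i)
    refine Finset.sum_pos' (fun l _ => sq_nonneg _) ⟨l0, Finset.mem_univ _, ?_⟩
    have : α l0 i ≠ 0 := hl0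
    positivity
  -- key: all directional derivatives vanish
  have key : ∀ (u : Matrix (Fin s) (Fin r) ℝ) (w : Matrix (Fin c) (Fin r) ℝ),
      (∑ i : Fin r, ((∑ l : Fin s, 2 * α l i * u l i) * (∑ k : Fin c, γ k i ^ 2)
          + (∑ l : Fin s, α l i ^ 2) * (∑ k : Fin c, 2 * γ k i * w k i))
        + 2 * ∑ i : Fin r, ∑ k : Fin c, ∑ l : Fin s,
            (w k i * M l k * α l i + γ k i * M l k * u l i)) = 0 := by
    intro u w
    have hline : HasDerivAt (fun t : ℝ => ((α, γ) + t • (u, w))) (u, w) 0 := by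
      have h := ((hasDerivAt_id (0:ℝ)).smul_const (u, w)).const_add (α, γ)
      simp only [one_smul] at h
      exact h
    have hcomp : HasDerivAt (fun t : ℝ =>
        (fun p : Matrix (Fin s) (Fin r) ℝ × Matrix (Fin c) (Fin r) ℝ =>
          K + ∑ i : Fin r, (∑ l : Fin s, (p.1 l i) ^ 2) * (∑ k : Fin c, (p.2 k i) ^ 2)
            + 2 * ∑ i : Fin r, ∑ k : Fin c, ∑ l : Fin s, p.2 k i * M l k * p.1 l i)
          ((α, γ) + t • (u, w))) 0 0 := by
      have hpt : (α, γ) + (0:ℝ) • (u, w) = (α, γ) := by simp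
      have hf := hcrit ▸ (hdiff (α, γ)).hasFDerivAt
      rw [← hpt] at hf
      have h := hf.comp_hasDerivAt 0 hline
      exact h
    have hfun : (fun t : ℝ =>
        (fun p : Matrix (Fin s) (Fin r) ℝ × Matrix (Fin c) (Fin r) ℝ =>
          K + ∑ i : Fin r, (∑ l : Fin s, (p.1 l i) ^ 2) * (∑ k : Fin c, (p.2 k i) ^ 2)
            + 2 * ∑ i : Fin r, ∑ k : Fin c, ∑ l : Fin s, p.2 k i * M l k * p.1 l i)
          ((α, γ) + t • (u, w))) =
        (fun t : ℝ =>
          K + ∑ i : Fin r, (∑ l : Fin s, (α l i + t * u l i) ^ 2) *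
              (∑ k : Fin c, (γ k i + t * w k i) ^ 2)
            + 2 * ∑ i : Fin r, ∑ k : Fin c, ∑ l : Fin s,
                (γ k i + t * w k i) * M l k * (α l i + t * u l i)) := by
      funext t
      simp [Matrix.add_apply, Matrix.smul_apply, smul_eq_mul]
    rw [hfun] at hcomp
    have he1 : ∀ (l : Fin s) (i : Fin r), HasDerivAt (fun t : ℝ => α l i + t * u l i) (u l i) 0 :=
      fun l i => (hasDerivAt_mul_const (u l i)).const_add (α l i)
    have he2 : ∀ (k : Fin c) (i : Fin r), HasDerivAt (fun t : ℝ => γ k i + t * w k i) (w k i) 0 :=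
      fun k i => (hasDerivAt_mul_const (w k i)).const_add (γ k i)
    have hsq1 : ∀ (l : Fin s) (i : Fin r),
        HasDerivAt (fun t : ℝ => (α l i + t * u l i) ^ 2) (2 * α l i * u l i) 0 := by
      intro l i; simpa using (he1 l i).fun_pow 2
    have hsq2 : ∀ (k : Fin c) (i : Fin r),
        HasDerivAt (fun t : ℝ => (γ k i + t * w k i) ^ 2) (2 * γ k i * w k i) 0 := by
      intro k i; simpa using (he2 k i).fun_pow 2
    have hprod : ∀ i : Fin r, HasDerivAt
        (fun t : ℝ => (∑ l : Fin s, (α l i + t * u l i) ^ 2) *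
          (∑ k : Fin c, (γ k i + t * w k i) ^ 2))
        ((∑ l : Fin s, 2 * α l i * u l i) * (∑ k : Fin c, γ k i ^ 2)
          + (∑ l : Fin s, α l i ^ 2) * (∑ k : Fin c, 2 * γ k i * w k i)) 0 := by
      intro i
      have h1 := HasDerivAt.fun_sum (fun l (_ : l ∈ Finset.univ) => hsq1 l i)
      have h2 := HasDerivAt.fun_sum (fun k (_ : k ∈ Finset.univ) => hsq2 k i)
      simpa using h1.fun_mul h2
    have hterm : ∀ (i : Fin r) (k : Fin c) (l : Fin s), HasDerivAt
        (fun t : ℝ => (γ k i + t * w k i) * M l k * (α l i + t * u l i))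
        (w k i * M l k * α l i + γ k i * M l k * u l i) 0 := by
      intro i k l
      simpa using ((he2 k i).mul_const (M l k)).fun_mul (he1 l i)
    have hexp := ((HasDerivAt.fun_sum (fun i (_ : i ∈ Finset.univ) => hprod i)).const_add K).fun_add
      ((HasDerivAt.fun_sum (fun i (_ : i ∈ Finset.univ) =>
        HasDerivAt.fun_sum (fun k (_ : k ∈ Finset.univ) =>
          HasDerivAt.fun_sum (fun l (_ : l ∈ Finset.univ) => hterm i k l)))).const_mul 2)
    exact hexp.unique hcomp
  -- first conclusion: γ in terms of α
  have hγ : ∀ i k, γ k i = -(∑ l : Fin s, M l k * α l i) / (∑ l : Fin s, (α l i) ^ 2) := by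
    intro i0 k0
    have h := key 0 (fun k i => if k = k0 then if i = i0 then 1 else 0 else 0)
    simp [Finset.mul_sum, mul_ite, ite_mul, Finset.sum_ite_eq, Finset.sum_ite_eq'] at h
    have hA0 : (∑ l : Fin s, α l i0 ^ 2) ≠ 0 := (hA i0).ne'
    rw [← Finset.mul_sum] at h
    rw [neg_div, eq_comm, neg_eq_iff_eq_neg, div_eq_iff (hA i0).ne', eq_comm]
    linear_combination -h / 2
  -- α-direction equation
  have hβ : ∀ (i0 : Fin r) (l0 : Fin s),
      2 * α l0 i0 * (∑ k : Fin c, γ k i0 ^ 2) + 2 * ∑ k : Fin c, γ k i0 * M l0 k = 0 := by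
    intro i0 l0
    have h := key (fun l i => if l = l0 then if i = i0 then 1 else 0 else 0) 0
    simp [Finset.mul_sum, mul_ite, ite_mul, Finset.sum_ite_eq, Finset.sum_ite_eq'] at h
    rw [← Finset.mul_sum, ← Finset.mul_sum] at h
    linear_combination h
  have hσ2 : ∀ i, σ i ^ 2 = (∑ k : Fin c, (∑ l : Fin s, M l k * α l i) ^ 2) /
      (∑ l : Fin s, (α l i) ^ 2) := by
    intro i
    rw [hσ i, div_pow, Real.sq_sqrt (by positivity), Real.sq_sqrt (by positivity)]
  have hG : ∀ i, ∑ k : Fin c, γ k i ^ 2 =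
      (∑ k : Fin c, (∑ l : Fin s, M l k * α l i) ^ 2) / (∑ l : Fin s, (α l i) ^ 2) ^ 2 := by
    intro i
    rw [Finset.sum_div]
    refine Finset.sum_congr rfl fun k _ => ?_
    rw [hγ i k]
    have := (hA i).ne'
    field_simp
  have hsum : ∀ (i : Fin r) (j : Fin s), ∑ k : Fin c, γ k i * M j k =
      -(∑ k : Fin c, M j k * ∑ l : Fin s, M l k * α l i) / (∑ l : Fin s, (α l i) ^ 2) := by
    intro i j
    rw [neg_div, Finset.sum_div, ← Finset.sum_neg_distrib]
    refine Finset.sum_congr rfl fun k _ => ?_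
    rw [hγ i k]
    have := (hA i).ne'
    field_simp
  refine ⟨hγ, fun i j => ?_, ?_⟩
  · have hMv : ((M * Mᵀ) *ᵥ fun l => α l i) j =
        ∑ k : Fin c, M j k * ∑ l : Fin s, M l k * α l i := by
      simp only [Matrix.mulVec, Matrix.mul_apply, dotProduct, Matrix.transpose_apply,
        Finset.sum_mul, Finset.mul_sum]
      rw [Finset.sum_comm]
      exact Finset.sum_congr rfl fun k _ => Finset.sum_congr rfl fun x _ => by ring
    have h := hβ i j
    rw [hG i, hsum i j] at h
    rw [hMv, hσ2 i]
    have hAne := (hA i).ne'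
    rw [div_mul_eq_mul_div, eq_div_iff hAne]
    field_simp at h
    have h' : (∑ l : Fin s, α l i ^ 2) *
        (2 * α j i * (∑ k : Fin c, (∑ l : Fin s, M l k * α l i) ^ 2)
          - 2 * (∑ k : Fin c, M j k * ∑ l : Fin s, M l k * α l i) * (∑ l : Fin s, α l i ^ 2)) = 0 := by
      linear_combination (∑ l : Fin s, α l i ^ 2) * h
    have h'' := (mul_eq_zero.mp h').resolve_left hAne
    linear_combination -h'' / 2
  · have h1 : ∀ i, (∑ l : Fin s, (α l i) ^ 2) * (∑ k : Fin c, γ k i ^ 2) = σ i ^ 2 := by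
      intro i
      rw [hG i, hσ2 i]
      have := (hA i).ne'
      field_simp
    have h2 : ∀ i, ∑ k : Fin c, ∑ l : Fin s, γ k i * M l k * α l i = -σ i ^ 2 := by
      intro i
      have e1 : ∀ k : Fin c, ∑ l : Fin s, γ k i * M l k * α l i =
          γ k i * ∑ l : Fin s, M l k * α l i := by
        intro k
        rw [Finset.mul_sum]
        exact Finset.sum_congr rfl fun l _ => by ring
      rw [Finset.sum_congr rfl fun k _ => e1 k, hσ2 i]
      have e2 : ∀ k : Fin c, γ k i * ∑ l : Fin s, M l k * α l i =
          -((∑ l : Fin s, M l k * α l i) ^ 2) / (∑ l : Fin s, (α l i) ^ 2) := by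
        intro k
        rw [hγ i k]
        have := (hA i).ne'
        field_simp
      rw [Finset.sum_congr rfl fun k _ => e2 k]
      simp [Finset.sum_div, neg_div]
    show K + (∑ i : Fin r, (∑ l : Fin s, (α l i) ^ 2) * (∑ k : Fin c, γ k i ^ 2))
        + 2 * ∑ i : Fin r, ∑ k : Fin c, ∑ l : Fin s, γ k i * M l k * α l i
        = K - ∑ i : Fin r, σ i ^ 2
    rw [Finset.sum_congr rfl fun i _ => h1 i, Finset.sum_congr rfl fun i _ => h2 i]
    simp [Finset.sum_neg_distrib]
    ring
end

section
/- Let S ∈ ℝ^{d×m_s} be a selection matrix and E ∈ ℝ^{q×q*} be a selection matrix. Let B ∈ ℝ^{d×m}, C ∈ ℝ^{m×q}, N ∈ ℝ^{d×q}, and set R := B C − N, as well as the column submatrices R* := R E and C* := C E. Assume C* has compact SVD C* = U* Σ* (V*)ᵀ with pseudoinverse (C*)⁺ := V* (Σ*)⁻¹ (U*)ᵀ. Define the updated matrix B_new := B − S Sᵀ R* (C*)⁺ (so that Sᵀ B_new = Sᵀ B − Sᵀ R* (C*)⁺ while the remaining rows of B are unchanged), and define δ := ‖Sᵀ R‖_F²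 − ‖Sᵀ (R − R* (C*)⁺ C)‖_F². Then ‖B_new C − N‖_F² = ‖B C − N‖_F² − δ; in particular, ‖B_new C − N‖_F < ‖B C − N‖_F if and only if δ > 0. -/
open Matrix

/-- EIM basis update: with `B_new = B − S Sᵀ R* (C*)⁺` one has
`‖B_new C − N‖_F² = ‖B C − N‖_F² − δ`, and the Frobenius-norm residual strictly
decreases iff `δ > 0`. -/
theorem eim_update_residual
    (d ms m q qs c : ℕ)
    (ι : Fin ms → Fin d) (hι : Function.Injective ι)
    (ε : Fin qs → Fin q) (hε : Function.Injective ε)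
    (S : Matrix (Fin d) (Fin ms) ℝ)
    (hS : S = Matrix.of fun i j => if i = ι j then (1 : ℝ) else 0)
    (E : Matrix (Fin q) (Fin qs) ℝ)
    (hE : E = Matrix.of fun i j => if i = ε j then (1 : ℝ) else 0)
    (B : Matrix (Fin d) (Fin m) ℝ) (C : Matrix (Fin m) (Fin q) ℝ)
    (N : Matrix (Fin d) (Fin q) ℝ)
    (R : Matrix (Fin d) (Fin q) ℝ) (hR : R = B * C - N)
    (U : Matrix (Fin m) (Fin c) ℝ) (Sg : Matrix (Fin c) (Fin c) ℝ)
    (V : Matrix (Fin qs) (Fin c) ℝ)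
    (hU : Uᵀ * U = 1) (hV : Vᵀ * V = 1)
    (hSgDiag : Sg.IsDiag) (hSgPos : ∀ i, 0 < Sg i i)
    (hSVD : C * E = U * Sg * Vᵀ)
    (Cplus : Matrix (Fin qs) (Fin m) ℝ) (hCplus : Cplus = V * Sg⁻¹ * Uᵀ)
    (Bnew : Matrix (Fin d) (Fin m) ℝ)
    (hBnew : Bnew = B - S * Sᵀ * (R * E) * Cplus)
    (δ : ℝ)
    (hδ : δ = frobSq (Sᵀ * R) - frobSq (Sᵀ * (R - (R * E) * Cplus * C))) :
    frobSq (Bnew * C - N) = frobSq (B * C - N) - δ ∧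
    (Real.sqrt (frobSq (Bnew * C - N)) < Real.sqrt (frobSq (B * C - N)) ↔ 0 < δ) := by
  classical
  set T : Finset (Fin d) := Finset.image ι Finset.univ with hT
  set X : Matrix (Fin d) (Fin q) ℝ := (R * E) * Cplus * C with hX
  -- entries of Sᵀ * Y
  have hSt : ∀ (Y : Matrix (Fin d) (Fin q) ℝ) (k : Fin ms) (j : Fin q),
      (Sᵀ * Y) k j = Y (ι k) j := by
    intro Y k j
    simp [hS, Matrix.mul_apply, Matrix.transpose_apply]
  have hfrobT : ∀ (Y : Matrix (Fin d) (Fin q) ℝ),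
      frobSq (Sᵀ * Y) = ∑ i ∈ T, ∑ j, (Y i j) ^ 2 := by
    intro Y
    rw [hT, Finset.sum_image (fun a _ b _ h => hι h)]
    simp [frobSq, hSt]
  -- S * Sᵀ acts as the projection onto rows in T
  have hP : ∀ (i : Fin d) (j : Fin q),
      (S * Sᵀ * X) i j = if i ∈ T then X i j else 0 := by
    intro i j
    have h1 : (S * Sᵀ * X) i j = ∑ k, if i = ι k then X (ι k) j else 0 := by
      rw [Matrix.mul_assoc, Matrix.mul_apply]
      refine Finset.sum_congr rfl fun k _ => ?_
      rw [hSt]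
      simp [hS, ite_mul]
    rw [h1]
    by_cases h : i ∈ T
    · obtain ⟨k0, -, rfl⟩ := Finset.mem_image.mp h
      rw [Finset.sum_eq_single k0]
      · simp [h]
      · intro k _ hk
        have : ι k0 ≠ ι k := fun hc => hk (hι hc).symm
        simp [this]
      · simp
    · rw [if_neg h]
      refine Finset.sum_eq_zero fun k _ => ?_
      have : i ≠ ι k := fun hc => h (by
        exact Finset.mem_image.mpr ⟨k, Finset.mem_univ k, hc.symm⟩)
      simp [this]
  -- the new residual
  have hres : Bnew * C - N = R - S * Sᵀ * X := by
    rw [hBnew, Matrix.sub_mul, sub_right_comm, hX]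
    simp [Matrix.mul_assoc, hR]
  -- split frobSq over T and its complement
  have split : ∀ (Y : Matrix (Fin d) (Fin q) ℝ),
      frobSq Y = (∑ i ∈ Finset.univ \ T, ∑ j, (Y i j) ^ 2)
        + ∑ i ∈ T, ∑ j, (Y i j) ^ 2 := by
    intro Y
    rw [frobSq, ← Finset.sum_sdiff (Finset.subset_univ T)]
  have e1 : ∑ i ∈ Finset.univ \ T, ∑ j, ((R - S * Sᵀ * X) i j) ^ 2
      = ∑ i ∈ Finset.univ \ T, ∑ j, (R i j) ^ 2 := by
    refine Finset.sum_congr rfl fun i hi => Finset.sum_congr rfl fun j _ => ?_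
    have hi' : i ∉ T := (Finset.mem_sdiff.mp hi).2
    simp [Matrix.sub_apply, hP, hi']
  have e2 : ∑ i ∈ T, ∑ j, ((R - S * Sᵀ * X) i j) ^ 2
      = ∑ i ∈ T, ∑ j, ((R - X) i j) ^ 2 := by
    refine Finset.sum_congr rfl fun i hi => Finset.sum_congr rfl fun j _ => ?_
    simp [Matrix.sub_apply, hP, hi]
  have hmain : frobSq (Bnew * C - N) = frobSq (B * C - N) - δ := by
    rw [hres, hδ, ← hR, split (R - S * Sᵀ * X), split R, e1, e2,
      hfrobT R, hfrobT (R - X)]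
    ring
  have hnn : ∀ {a b : ℕ} (A : Matrix (Fin a) (Fin b) ℝ), 0 ≤ frobSq A := by
    intro a b A
    exact Finset.sum_nonneg fun i _ => Finset.sum_nonneg fun j _ => sq_nonneg _
  refine ⟨hmain, ?_, ?_⟩
  · intro hlt
    by_contra h
    push_neg at h
    have hge : frobSq (B * C - N) ≤ frobSq (Bnew * C - N) := by
      rw [hmain]; linarith
    exact absurd (Real.sqrt_le_sqrt hge) (not_le.mpr hlt)
  · intro hpos
    have hlt : frobSq (Bnew * C - N) < frobSq (B * C - N) := by
      rw [hmain]; linarith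
    exact Real.sqrt_lt_sqrt (hnn _) hlt
end

section
/- Let n, p be positive natural numbers and, for each k = 1, …, p, let f_k : ℝⁿ → ℝⁿ be Lipschitz continuous with constant ℓ_k ≥ 0. Let F be the induced map on matrices in ℝ^{n×p} that applies f_k to the k-th column. Set L := (Σ_{k=1}^{p} ℓ_k²)^{1/2}. Let t̄ < T and let X, W : [t̄, T] → ℝ^{n×p} be differentiable, with X′(t) = F(X(t)) for all t ∈ [t̄, T]. Define E(t) := X(t) − W(t) and r̃(t) := ‖F(W(t)) − W′(t)‖_F, and assume r̃ is continuous on [t̄, T]. Then for all t ∈ [t̄, T]: ‖E(t)‖_F ≤ ‖E(t̄)‖_F · e^{L (t − t̄)} + ∫_{t̄}^{t} r̃(τ) e^{L (t − τ)} dτ. -/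
open Matrix

/-- Frobenius norm of a real matrix. -/
noncomputable def frobNorm {a b : ℕ} (A : Matrix (Fin a) (Fin b) ℝ) : ℝ :=
  Real.sqrt (∑ i, ∑ j, (A i j) ^ 2)

namespace GronwallAux

noncomputable def emb {n p : ℕ} : (Fin n × Fin p → ℝ) ≃L[ℝ] EuclideanSpace ℝ (Fin n × Fin p) :=
  (PiLp.continuousLinearEquiv 2 ℝ (fun _ : Fin n × Fin p => ℝ)).symm

lemma norm_emb {n p : ℕ} (w : Fin n × Fin p → ℝ) :
    ‖emb w‖ = Real.sqrt (∑ q : Fin n × Fin p, (w q) ^ 2) := by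
  rw [EuclideanSpace.norm_eq]
  congr 1
  apply Finset.sum_congr rfl
  intro q _
  have : (emb w : EuclideanSpace ℝ (Fin n × Fin p)) q = w q := rfl
  rw [this, Real.norm_eq_abs, sq_abs]

lemma frobNorm_eq_norm {n p : ℕ} (A : Matrix (Fin n) (Fin p) ℝ) :
    frobNorm A = ‖emb (fun q : Fin n × Fin p => A q.1 q.2)‖ := by
  rw [norm_emb, frobNorm, Fintype.sum_prod_type]

lemma lip_sum {n p : ℕ}
    (f : Fin p → (Fin n → ℝ) → (Fin n → ℝ)) (ℓ : Fin p → ℝ) (hℓ : ∀ k, 0 ≤ ℓ k)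
    (hf : ∀ k (x y : Fin n → ℝ),
      Real.sqrt (∑ j, (f k x j - f k y j) ^ 2) ≤ ℓ k * Real.sqrt (∑ j, (x j - y j) ^ 2))
    (A B : Matrix (Fin n) (Fin p) ℝ) :
    Real.sqrt (∑ i, ∑ k, (f k (fun j => A j k) i - f k (fun j => B j k) i) ^ 2)
      ≤ Real.sqrt (∑ k, ℓ k ^ 2) * Real.sqrt (∑ i, ∑ k, (A i k - B i k) ^ 2) := by
  have hS2 : ∀ k : Fin p, (0:ℝ) ≤ ∑ i, (A i k - B i k) ^ 2 :=
    fun k => Finset.sum_nonneg fun i _ => sq_nonneg _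
  have h1 : ∀ k : Fin p, ∑ i, (f k (fun j => A j k) i - f k (fun j => B j k) i) ^ 2
      ≤ ℓ k ^ 2 * ∑ i, (A i k - B i k) ^ 2 := by
    intro k
    have h := hf k (fun j => A j k) (fun j => B j k)
    have hnn : (0:ℝ) ≤ Real.sqrt (∑ i, (f k (fun j => A j k) i - f k (fun j => B j k) i) ^ 2) :=
      Real.sqrt_nonneg _
    have h2 := mul_self_le_mul_self hnn h
    rw [Real.mul_self_sqrt (Finset.sum_nonneg fun i _ => sq_nonneg _)] at h2
    calc ∑ i, (f k (fun j => A j k) i - f k (fun j => B j k) i) ^ 2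
        ≤ (ℓ k * Real.sqrt (∑ i, (A i k - B i k) ^ 2)) *
            (ℓ k * Real.sqrt (∑ i, (A i k - B i k) ^ 2)) := h2
      _ = ℓ k ^ 2 * (Real.sqrt (∑ i, (A i k - B i k) ^ 2) *
            Real.sqrt (∑ i, (A i k - B i k) ^ 2)) := by ring
      _ = ℓ k ^ 2 * ∑ i, (A i k - B i k) ^ 2 := by rw [Real.mul_self_sqrt (hS2 k)]
  have hTot : ∀ k : Fin p, (∑ i, (A i k - B i k) ^ 2) ≤ ∑ i, ∑ k', (A i k' - B i k') ^ 2 := by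
    intro k
    rw [Finset.sum_comm]
    exact Finset.single_le_sum (f := fun k' => ∑ i, (A i k' - B i k') ^ 2)
      (fun k' _ => hS2 k') (Finset.mem_univ k)
  have key : (∑ i, ∑ k, (f k (fun j => A j k) i - f k (fun j => B j k) i) ^ 2)
      ≤ (∑ k, ℓ k ^ 2) * (∑ i, ∑ k, (A i k - B i k) ^ 2) := by
    rw [Finset.sum_comm, Finset.sum_mul]
    refine Finset.sum_le_sum fun k _ => (h1 k).trans ?_
    exact mul_le_mul_of_nonneg_left (hTot k) (sq_nonneg _)
  calc Real.sqrt (∑ i, ∑ k, (f k (fun j => A j k) i - f k (fun j => B j k) i) ^ 2)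
      ≤ Real.sqrt ((∑ k, ℓ k ^ 2) * (∑ i, ∑ k, (A i k - B i k) ^ 2)) := Real.sqrt_le_sqrt key
    _ = Real.sqrt (∑ k, ℓ k ^ 2) * Real.sqrt (∑ i, ∑ k, (A i k - B i k) ^ 2) :=
        Real.sqrt_mul (Finset.sum_nonneg fun k _ => sq_nonneg _) _

end GronwallAux

open GronwallAux in
/-- Grönwall-type error bound: if `X` solves the column-wise ODE `X' = F(X)` with
column-wise Lipschitz field `F` and `W` is any differentiable approximation, then
`‖X(t) − W(t)‖_F ≤ ‖X(t̄) − W(t̄)‖_F e^{L(t−t̄)} + ∫_{t̄}^{t} r̃(τ) e^{L(t−τ)} dτ`. -/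
theorem gronwall_error_bound
    (n p : ℕ) (hn : 0 < n) (hp : 0 < p)
    (f : Fin p → (Fin n → ℝ) → (Fin n → ℝ)) (ℓ : Fin p → ℝ) (hℓ : ∀ k, 0 ≤ ℓ k)
    (hf : ∀ k (x y : Fin n → ℝ),
      Real.sqrt (∑ j, (f k x j - f k y j) ^ 2) ≤ ℓ k * Real.sqrt (∑ j, (x j - y j) ^ 2))
    (F : Matrix (Fin n) (Fin p) ℝ → Matrix (Fin n) (Fin p) ℝ)
    (hF : ∀ A i k, F A i k = f k (fun j => A j k) i)
    (L : ℝ) (hL : L = Real.sqrt (∑ k, ℓ k ^ 2))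
    (tbar T : ℝ) (htT : tbar < T)
    (X W X' W' : ℝ → Matrix (Fin n) (Fin p) ℝ)
    (hX : ∀ t ∈ Set.Icc tbar T, ∀ i k, HasDerivAt (fun τ => X τ i k) (X' t i k) t)
    (hW : ∀ t ∈ Set.Icc tbar T, ∀ i k, HasDerivAt (fun τ => W τ i k) (W' t i k) t)
    (hXode : ∀ t ∈ Set.Icc tbar T, X' t = F (X t))
    (r : ℝ → ℝ) (hr : ∀ t, r t = frobNorm (F (W t) - W' t))
    (hrcont : ContinuousOn r (Set.Icc tbar T)) :
    ∀ t ∈ Set.Icc tbar T,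
      frobNorm (X t - W t) ≤
        frobNorm (X tbar - W tbar) * Real.exp (L * (t - tbar))
          + ∫ τ in tbar..t, r τ * Real.exp (L * (t - τ)) := by
  have hT : tbar ≤ T := le_of_lt htT
  have hL0 : 0 ≤ L := hL ▸ Real.sqrt_nonneg _
  -- extended residual
  set ρ : ℝ → ℝ := Set.IccExtend hT (fun τ : Set.Icc tbar T => r τ) with hρdef
  have hρcont : Continuous ρ := (hrcont.restrict).Icc_extend'
  have hρeq : ∀ t ∈ Set.Icc tbar T, ρ t = r t := fun t ht => by
    rw [hρdef, Set.IccExtend_of_mem hT _ ht]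
  -- error vector in Euclidean space
  set E : ℝ → EuclideanSpace ℝ (Fin n × Fin p) :=
    fun t => emb (fun q => X t q.1 q.2 - W t q.1 q.2) with hEdef
  set E' : ℝ → EuclideanSpace ℝ (Fin n × Fin p) :=
    fun t => emb (fun q => X' t q.1 q.2 - W' t q.1 q.2) with hE'def
  have hEderiv : ∀ t ∈ Set.Icc tbar T, HasDerivAt E (E' t) t := by
    intro t ht
    have hpi : HasDerivAt (fun τ => (fun q : Fin n × Fin p => X τ q.1 q.2 - W τ q.1 q.2))
        (fun q : Fin n × Fin p => X' t q.1 q.2 - W' t q.1 q.2) t :=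
      hasDerivAt_pi.2 fun q => (hX t ht q.1 q.2).sub (hW t ht q.1 q.2)
    exact (emb.hasFDerivAt.comp_hasDerivAt t hpi)
  have hEcont : ContinuousOn E (Set.Icc tbar T) :=
    fun t ht => (hEderiv t ht).continuousAt.continuousWithinAt
  have hnormE : ∀ t, ‖E t‖ = frobNorm (X t - W t) := by
    intro t
    rw [frobNorm_eq_norm, hEdef]
    rfl
  set C : ℝ := frobNorm (X tbar - W tbar) with hCdef
  -- growth inequality for the derivative
  have hgrow : ∀ t ∈ Set.Icc tbar T, ‖E' t‖ ≤ L * ‖E t‖ + ρ t := by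
    intro t ht
    set u : Fin n × Fin p → ℝ := fun q => F (X t) q.1 q.2 - F (W t) q.1 q.2 with hu
    set v : Fin n × Fin p → ℝ := fun q => F (W t) q.1 q.2 - W' t q.1 q.2 with hv
    have hsplit : E' t = emb u + emb v := by
      have h0 : (fun q : Fin n × Fin p => X' t q.1 q.2 - W' t q.1 q.2) = u + v := by
        funext q
        simp only [hu, hv, Pi.add_apply]
        rw [hXode t ht]
        ring
      show emb (fun q : Fin n × Fin p => X' t q.1 q.2 - W' t q.1 q.2) = emb u + emb v
      rw [h0, map_add]
    have hub : ‖emb u‖ ≤ L * ‖E t‖ := by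
      rw [norm_emb, hEdef, norm_emb, hL]
      have := lip_sum f ℓ hℓ hf (X t) (W t)
      calc Real.sqrt (∑ q : Fin n × Fin p, (u q) ^ 2)
          = Real.sqrt (∑ i, ∑ k, (f k (fun j => X t j k) i - f k (fun j => W t j k) i) ^ 2) := by
            rw [Fintype.sum_prod_type]
            congr 1; apply Finset.sum_congr rfl; intro i _
            apply Finset.sum_congr rfl; intro k _
            rw [hu]; simp only [hF]
        _ ≤ Real.sqrt (∑ k, ℓ k ^ 2) *
              Real.sqrt (∑ i, ∑ k, (X t i k - W t i k) ^ 2) := this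
        _ = Real.sqrt (∑ k, ℓ k ^ 2) *
              Real.sqrt (∑ q : Fin n × Fin p, (X t q.1 q.2 - W t q.1 q.2) ^ 2) := by
            rw [Fintype.sum_prod_type]
    have hvb : ‖emb v‖ = ρ t := by
      rw [norm_emb, hρeq t ht, hr, frobNorm, Fintype.sum_prod_type]
      simp [hv, Matrix.sub_apply]
    calc ‖E' t‖ = ‖emb u + emb v‖ := by rw [hsplit]
      _ ≤ ‖emb u‖ + ‖emb v‖ := norm_add_le _ _
      _ ≤ L * ‖E t‖ + ρ t := by rw [hvb]; exact add_le_add hub le_rfl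
  -- the comparison function
  set g : ℝ → ℝ := fun t => ∫ τ in tbar..t, ρ τ * Real.exp (-(L * τ)) with hgdef
  have hinteg : Continuous fun τ => ρ τ * Real.exp (-(L * τ)) := by
    exact hρcont.mul (Real.continuous_exp.comp (continuous_const.mul continuous_id).neg)
  have hg : ∀ t, HasDerivAt g (ρ t * Real.exp (-(L * t))) t := by
    intro t
    exact (intervalIntegral.integral_hasStrictDerivAt_right (hinteg.intervalIntegrable tbar t)
      (hinteg.stronglyMeasurableAtFilter _ _) hinteg.continuousAt).hasDerivAt
  set B : ℝ → ℝ := fun t => Real.exp (L * t) * (C * Real.exp (-(L * tbar)) + g t) with hBdef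
  have hexp1 : ∀ s : ℝ, Real.exp (L * s) * Real.exp (-(L * s)) = 1 := by
    intro s; rw [← Real.exp_add]; simp
  have hB : ∀ t, HasDerivAt B (L * B t + ρ t) t := by
    intro t
    have hexp : HasDerivAt (fun y => Real.exp (L * y)) (Real.exp (L * t) * L) t := by
      simpa using ((hasDerivAt_id t).const_mul L).exp
    have h : HasDerivAt B (Real.exp (L * t) * L * (C * Real.exp (-(L * tbar)) + g t) + Real.exp (L * t) * (ρ t * Real.exp (-(L * t)))) t :=
      hexp.mul ((hg t).const_add (C * Real.exp (-(L * tbar))))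
    convert h using 1
    have key : Real.exp (L * t) * (ρ t * Real.exp (-(L * t))) = ρ t := by
      rw [mul_comm (ρ t), ← mul_assoc, hexp1, one_mul]
    rw [hBdef]
    simp only []
    nlinarith [hexp1 t, key]
  have hBtbar : B tbar = C := by
    rw [hBdef]
    simp only [hgdef]
    rw [intervalIntegral.integral_same, add_zero, ← mul_assoc, mul_comm (Real.exp (L * tbar)) C,
      mul_assoc, hexp1, mul_one]
  -- the ε-perturbed bound via the fencing theorem
  intro t ht
  have hclaim : ∀ ε > (0:ℝ), ‖E t‖ ≤ B t + ε * Real.exp ((L + 1) * (t - tbar)) := by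
    intro ε hε
    set Bε : ℝ → ℝ := fun s => B s + ε * Real.exp ((L + 1) * (s - tbar)) with hBεdef
    have hBε : ∀ s, HasDerivAt Bε
        (L * B s + ρ s + ε * (Real.exp ((L + 1) * (s - tbar)) * (L + 1))) s := by
      intro s
      have h2 : HasDerivAt (fun y => Real.exp ((L + 1) * (y - tbar)))
          (Real.exp ((L + 1) * (s - tbar)) * ((L + 1) * 1)) s :=
        (((hasDerivAt_id s).sub_const tbar).const_mul (L + 1)).exp
      have : HasDerivAt Bε (L * B s + ρ s + ε * (Real.exp ((L + 1) * (s - tbar)) * ((L + 1) * 1))) s :=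
        (hB s).add (h2.const_mul ε)
      convert this using 1
      ring
    have := image_norm_le_of_norm_deriv_right_lt_deriv_boundary
      (f := E) (f' := E') (a := tbar) (b := T)
      (hEcont) (fun s hs => (hEderiv s (Set.mem_Icc.2 ⟨hs.1, le_of_lt hs.2⟩)).hasDerivWithinAt)
      (B := Bε)
      (B' := fun s => L * B s + ρ s + ε * (Real.exp ((L + 1) * (s - tbar)) * (L + 1)))
      (by
        rw [hnormE, hBεdef]
        simp only [hBtbar]
        have : Real.exp ((L + 1) * (tbar - tbar)) = 1 := by simp
        rw [this, mul_one, ← hCdef]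
        linarith [mul_pos hε Real.zero_lt_one])
      hBε
      (by
        intro s hs heq
        have hs' : s ∈ Set.Icc tbar T := ⟨hs.1, le_of_lt hs.2⟩
        have h1 := hgrow s hs'
        have hep : (0:ℝ) < Real.exp ((L + 1) * (s - tbar)) := Real.exp_pos _
        calc ‖E' s‖ ≤ L * ‖E s‖ + ρ s := h1
          _ = L * Bε s + ρ s := by rw [heq]
          _ = L * B s + ρ s + ε * (Real.exp ((L + 1) * (s - tbar)) * L) := by
              rw [hBεdef]; ring
          _ < L * B s + ρ s + ε * (Real.exp ((L + 1) * (s - tbar)) * (L + 1)) := by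
              have : Real.exp ((L + 1) * (s - tbar)) * L
                  < Real.exp ((L + 1) * (s - tbar)) * (L + 1) := by nlinarith
              nlinarith)
      ht
    exact this
  have hEB : ‖E t‖ ≤ B t := by
    have hep : (0:ℝ) < Real.exp ((L + 1) * (t - tbar)) := Real.exp_pos _
    refine le_of_forall_pos_le_add fun δ hδ => ?_
    have h := hclaim (δ / Real.exp ((L + 1) * (t - tbar))) (div_pos hδ hep)
    rwa [div_mul_cancel₀ _ (ne_of_gt hep)] at h
  -- rewrite B t as the stated bound
  have hint : (∫ τ in tbar..t, r τ * Real.exp (L * (t - τ))) = Real.exp (L * t) * g t := by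
    rw [hgdef]
    simp only []
    rw [← intervalIntegral.integral_const_mul]
    apply intervalIntegral.integral_congr
    intro τ hτ
    have hτ' : τ ∈ Set.Icc tbar T := by
      rw [Set.uIcc_of_le ht.1] at hτ
      exact ⟨hτ.1, le_trans hτ.2 ht.2⟩
    show r τ * Real.exp (L * (t - τ)) = Real.exp (L * t) * (ρ τ * Real.exp (-(L * τ)))
    rw [← hρeq τ hτ']
    rw [show L * (t - τ) = L * t + -(L * τ) by ring, Real.exp_add]
    ring
  have hBt : B t = C * Real.exp (L * (t - tbar)) + ∫ τ in tbar..t, r τ * Real.exp (L * (t - τ)) := by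
    rw [hint, hBdef]
    simp only []
    rw [show L * (t - tbar) = L * t + -(L * tbar) by ring, Real.exp_add]
    ring
  rw [← hnormE t]
  exact hEB.trans_eq hBt
end
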